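/- (Theorem 2, (i)⇔(v)) There exists an observer candidate Σ̂ (i.e., matrices A_UIO ∈ ℝ^{n×n}, Bu ∈ ℝ^{n×m}, By ∈ ℝ^{n×p}, Du ∈ ℝ^{n×m}, Dy ∈ ℝ^{n×p}) that is a UIO for the system Σ if and only if there exist matrices A_UIO, Bu, By, Du, Dy with A_UIO Schur stable satisfying the acceptor equations: (i) (I_n − Dy C) E + (A_UIO Dy − By) F = 0; (ii) Dy F = 0; (iii) A_UIO = (I_n − Dy C) A + (A_UIO Dy − By) C; (iv) Bu = (I_n − Dy C) B − By D; (v) Du = −Dy D. -/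

import Mathlib

open Matrix Filter

noncomputable section

/-- A real square matrix is Schur stable if all its complex eigenvalues
have modulus strictly less than 1. -/
def SchurStable {n : ℕ} (M : Matrix (Fin n) (Fin n) ℝ) : Prop :=
  ∀ μ ∈ spectrum ℂ (M.map (algebraMap ℝ ℂ)), ‖μ‖ < 1

/-- `(x, u, y, d)` is a solution of the system `Σ`:
`x(t+1) = A x(t) + B u(t) + E d(t)`, `y(t) = C x(t) + D u(t) + F d(t)`. -/
def SigmaSol {n m p r : ℕ}
    (A : Matrix (Fin n) (Fin n) ℝ) (B : Matrix (Fin n) (Fin m) ℝ)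
    (Cm : Matrix (Fin p) (Fin n) ℝ) (Dm : Matrix (Fin p) (Fin m) ℝ)
    (E : Matrix (Fin n) (Fin r) ℝ) (F : Matrix (Fin p) (Fin r) ℝ)
    (x : ℕ → Fin n → ℝ) (u : ℕ → Fin m → ℝ) (y : ℕ → Fin p → ℝ)
    (d : ℕ → Fin r → ℝ) : Prop :=
  ∀ t : ℕ,
    x (t + 1) = A.mulVec (x t) + B.mulVec (u t) + E.mulVec (d t) ∧
    y t = Cm.mulVec (x t) + Dm.mulVec (u t) + F.mulVec (d t)

/-- `(x̂, u, y, z)` is a solution of the observer candidate `Σ̂`: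
`z(t+1) = A_UIO z(t) + Bu u(t) + By y(t)`, `x̂(t) = z(t) + Du u(t) + Dy y(t)`. -/
def ObsSol {n m p : ℕ}
    (Auio : Matrix (Fin n) (Fin n) ℝ) (Bu : Matrix (Fin n) (Fin m) ℝ)
    (By : Matrix (Fin n) (Fin p) ℝ) (Du : Matrix (Fin n) (Fin m) ℝ)
    (Dy : Matrix (Fin n) (Fin p) ℝ)
    (xh : ℕ → Fin n → ℝ) (u : ℕ → Fin m → ℝ) (y : ℕ → Fin p → ℝ)
    (z : ℕ → Fin n → ℝ) : Prop :=
  ∀ t : ℕ,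
    z (t + 1) = Auio.mulVec (z t) + Bu.mulVec (u t) + By.mulVec (y t) ∧
    xh t = z t + Du.mulVec (u t) + Dy.mulVec (y t)

/-- `Σ̂` is an acceptor for `Σ`: every solution of `Σ` can be tracked exactly. -/
def IsAcceptor {n m p r : ℕ}
    (A : Matrix (Fin n) (Fin n) ℝ) (B : Matrix (Fin n) (Fin m) ℝ)
    (Cm : Matrix (Fin p) (Fin n) ℝ) (Dm : Matrix (Fin p) (Fin m) ℝ)
    (E : Matrix (Fin n) (Fin r) ℝ) (F : Matrix (Fin p) (Fin r) ℝ)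
    (Auio : Matrix (Fin n) (Fin n) ℝ) (Bu : Matrix (Fin n) (Fin m) ℝ)
    (By : Matrix (Fin n) (Fin p) ℝ) (Du : Matrix (Fin n) (Fin m) ℝ)
    (Dy : Matrix (Fin n) (Fin p) ℝ) : Prop :=
  ∀ (x : ℕ → Fin n → ℝ) (u : ℕ → Fin m → ℝ) (y : ℕ → Fin p → ℝ)
    (d : ℕ → Fin r → ℝ), SigmaSol A B Cm Dm E F x u y d →
      ∃ z : ℕ → Fin n → ℝ, ObsSol Auio Bu By Du Dy x u y z

/-- `Σ̂` is an unknown-input observer (UIO) for `Σ`: it is an acceptor and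
the estimation error tends to zero for all matching solutions. -/
def IsUIO {n m p r : ℕ}
    (A : Matrix (Fin n) (Fin n) ℝ) (B : Matrix (Fin n) (Fin m) ℝ)
    (Cm : Matrix (Fin p) (Fin n) ℝ) (Dm : Matrix (Fin p) (Fin m) ℝ)
    (E : Matrix (Fin n) (Fin r) ℝ) (F : Matrix (Fin p) (Fin r) ℝ)
    (Auio : Matrix (Fin n) (Fin n) ℝ) (Bu : Matrix (Fin n) (Fin m) ℝ)
    (By : Matrix (Fin n) (Fin p) ℝ) (Du : Matrix (Fin n) (Fin m) ℝ)
    (Dy : Matrix (Fin n) (Fin p) ℝ) : Prop :=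
  IsAcceptor A B Cm Dm E F Auio Bu By Du Dy ∧
  ∀ (x : ℕ → Fin n → ℝ) (u : ℕ → Fin m → ℝ) (y : ℕ → Fin p → ℝ)
    (d : ℕ → Fin r → ℝ) (xh : ℕ → Fin n → ℝ) (z : ℕ → Fin n → ℝ),
      SigmaSol A B Cm Dm E F x u y d → ObsSol Auio Bu By Du Dy xh u y z →
      Tendsto (fun t => x t - xh t) atTop (nhds 0)

/-- Row index type of the data matrix `Φ_d = [X_p; X_f; U_p; U_f; Y_p; Y_f]`. -/
abbrev RowIdx (n m p : ℕ) := (Fin n ⊕ Fin n) ⊕ ((Fin m ⊕ Fin m) ⊕ (Fin p ⊕ Fin p))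

/-- The data matrix `Φ_d = [X_p; X_f; U_p; U_f; Y_p; Y_f] ∈ ℝ^{2(n+m+p)×(T−1)}`. -/
def PhiD {n m p : ℕ} (T : ℕ) (xd : ℕ → Fin n → ℝ) (ud : ℕ → Fin m → ℝ)
    (yd : ℕ → Fin p → ℝ) : Matrix (RowIdx n m p) (Fin (T - 1)) ℝ :=
  Matrix.of fun i j =>
    match i with
    | Sum.inl (Sum.inl a) => xd j.1 a
    | Sum.inl (Sum.inr a) => xd (j.1 + 1) a
    | Sum.inr (Sum.inl (Sum.inl a)) => ud j.1 a
    | Sum.inr (Sum.inl (Sum.inr a)) => ud (j.1 + 1) a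
    | Sum.inr (Sum.inr (Sum.inl a)) => yd j.1 a
    | Sum.inr (Sum.inr (Sum.inr a)) => yd (j.1 + 1) a

/-- The stacked vector `(x(t), x(t+1), u(t), u(t+1), y(t), y(t+1))`. -/
def stackVec {n m p : ℕ} (x : ℕ → Fin n → ℝ) (u : ℕ → Fin m → ℝ)
    (y : ℕ → Fin p → ℝ) (t : ℕ) : RowIdx n m p → ℝ :=
  fun i =>
    match i with
    | Sum.inl (Sum.inl a) => x t a
    | Sum.inl (Sum.inr a) => x (t + 1) a
    | Sum.inr (Sum.inl (Sum.inl a)) => u t a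
    | Sum.inr (Sum.inl (Sum.inr a)) => u (t + 1) a
    | Sum.inr (Sum.inr (Sum.inl a)) => y t a
    | Sum.inr (Sum.inr (Sum.inr a)) => y (t + 1) a

/-- The matrix `[X_p; U_p; U_f; D_p; D_f]` appearing in the Assumption. -/
def HistMat {n m r : ℕ} (T : ℕ) (xd : ℕ → Fin n → ℝ) (ud : ℕ → Fin m → ℝ)
    (dd : ℕ → Fin r → ℝ) :
    Matrix (Fin n ⊕ ((Fin m ⊕ Fin m) ⊕ (Fin r ⊕ Fin r))) (Fin (T - 1)) ℝ :=
  Matrix.of fun i j =>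
    match i with
    | Sum.inl a => xd j.1 a
    | Sum.inr (Sum.inl (Sum.inl a)) => ud j.1 a
    | Sum.inr (Sum.inl (Sum.inr a)) => ud (j.1 + 1) a
    | Sum.inr (Sum.inr (Sum.inl a)) => dd j.1 a
    | Sum.inr (Sum.inr (Sum.inr a)) => dd (j.1 + 1) a

/-! The observer state is forced to be the tracking state `x - Du u - Dy y`, so `Σ̂` is an
acceptor exactly when the tracking state obeys the observer recursion along every solution of `Σ`.
Along a solution the defect of that recursion is a linear form in `x(t), u(t), d(t), u(t+1),
d(t+1)`; these five vectors can be prescribed freely, so acceptance amounts to the vanishing of the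
five coefficient matrices, i.e. to the acceptor equations. Once they hold, the estimation error
obeys `e(t+1) = A_UIO e(t)`, so it tends to zero for all initial errors iff `A_UIO ^ t → 0`. By
Gelfand's formula, and by `μ ∈ σ(a) → μ ^ t ∈ σ(a ^ t)` for the converse, this is Schur
stability of `A_UIO`. -/

open Topology

theorem norm_lt_one_of_mem_spectrum_of_tendsto_pow {𝕜 A : Type*} [NormedField 𝕜] [NormedRing A]
    [NormedAlgebra 𝕜 A] [CompleteSpace A] {a : A} (ha : Tendsto (a ^ ·) atTop (𝓝 0))
    {μ : 𝕜} (hμ : μ ∈ spectrum 𝕜 a) : ‖μ‖ < 1 := by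
  have hsmall : ∀ᶠ t in atTop, ‖a ^ t‖ * ‖(1 : A)‖ < 1 := by
    have := ha.norm.mul_const ‖(1 : A)‖
    rw [norm_zero, zero_mul] at this
    exact this.eventually (gt_mem_nhds one_pos)
  obtain ⟨t, ht, ht1⟩ := (hsmall.and (eventually_ge_atTop 1)).exists
  refine (pow_lt_one_iff_of_nonneg (norm_nonneg μ) (Nat.one_le_iff_ne_zero.1 ht1)).1 ?_
  calc ‖μ‖ ^ t = ‖μ ^ t‖ := (norm_pow μ t).symm
    _ ≤ ‖a ^ t‖ * ‖(1 : A)‖ := spectrum.norm_le_norm_mul_of_mem (spectrum.pow_mem_pow a t hμ)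
    _ < 1 := ht

theorem tendsto_pow_nhds_zero_of_forall_mem_spectrum_norm_lt_one {A : Type*} [NormedRing A]
    [NormedAlgebra ℂ A] [CompleteSpace A] {a : A} (h : ∀ μ ∈ spectrum ℂ a, ‖μ‖ < 1) :
    Tendsto (a ^ ·) atTop (𝓝 0) := by
  nontriviality A
  have hρ : spectralRadius ℂ a < 1 := by
    simpa using spectrum.spectralRadius_lt_of_forall_lt a (r := 1) fun μ hμ => h μ hμ
  obtain ⟨c, hρc, hc1⟩ := ENNReal.lt_iff_exists_nnreal_btwn.1 hρ
  have hbound : ∀ᶠ t : ℕ in atTop, ‖a ^ t‖ ≤ (c : ℝ) ^ t := by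
    filter_upwards [(spectrum.pow_norm_pow_one_div_tendsto_nhds_spectralRadius a).eventually
      (gt_mem_nhds hρc), eventually_ge_atTop 1] with t ht ht1
    rw [← ENNReal.ofReal_coe_nnreal, ENNReal.ofReal_lt_ofReal_iff', one_div,
      Real.rpow_inv_lt_iff_of_pos (norm_nonneg _) c.coe_nonneg (by positivity),
      Real.rpow_natCast] at ht
    exact ht.1.le
  exact squeeze_zero_norm' hbound
    (tendsto_pow_atTop_nhds_zero_of_lt_one c.coe_nonneg (by exact_mod_cast hc1))

theorem Matrix.tendsto_nhds_zero_iff_forall_tendsto_mulVec {α m n R : Type*} [Fintype n]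
    [DecidableEq n] [Semiring R] [TopologicalSpace R] [IsTopologicalSemiring R]
    {f : α → Matrix m n R} {l : Filter α} :
    Tendsto f l (𝓝 0) ↔ ∀ v, Tendsto (fun x => f x *ᵥ v) l (𝓝 0) := by
  refine ⟨fun hf v => ?_, fun hf => ?_⟩
  · simpa [Function.comp_def] using
      ((continuous_id.matrix_mulVec continuous_const).tendsto (0 : Matrix m n R)).comp hf
  · refine tendsto_pi_nhds.2 fun i => tendsto_pi_nhds.2 fun j => ?_
    simpa [Matrix.mulVec_single_one] using tendsto_pi_nhds.1 (hf (Pi.single j 1)) i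

theorem Matrix.tendsto_map_algebraMap_nhds_zero_iff {α m n : Type*} {f : α → Matrix m n ℝ}
    {l : Filter α} :
    Tendsto (fun x => (f x).map (algebraMap ℝ ℂ)) l (𝓝 0) ↔ Tendsto f l (𝓝 0) := by
  refine ⟨fun h => ?_, fun h => ?_⟩
  · simpa [Function.comp_def, Matrix.map_map] using
      ((continuous_id.matrix_map Complex.continuous_re).tendsto 0).comp h
  · simpa [Function.comp_def] using
      ((continuous_id.matrix_map Complex.continuous_ofReal).tendsto 0).comp h

section SchurStable

variable {n : ℕ} {M : Matrix (Fin n) (Fin n) ℝ}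

theorem SchurStable.tendsto_pow (hM : SchurStable M) : Tendsto (M ^ ·) atTop (𝓝 0) := by
  have hMc : Tendsto (fun t : ℕ => M.map (algebraMap ℝ ℂ) ^ t) atTop (𝓝 0) := by
    open scoped Matrix.Norms.Operator in
    exact tendsto_pow_nhds_zero_of_forall_mem_spectrum_norm_lt_one hM
  rw [← Matrix.tendsto_map_algebraMap_nhds_zero_iff]
  simpa only [Matrix.map_pow] using hMc

theorem SchurStable.of_tendsto_pow (hM : Tendsto (M ^ ·) atTop (𝓝 0)) : SchurStable M := by
  have hMc : Tendsto (fun t : ℕ => M.map (algebraMap ℝ ℂ) ^ t) atTop (𝓝 0) := by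
    simpa only [Matrix.map_pow] using Matrix.tendsto_map_algebraMap_nhds_zero_iff.2 hM
  open scoped Matrix.Norms.Operator in
  exact fun μ hμ => norm_lt_one_of_mem_spectrum_of_tendsto_pow hMc hμ

theorem schurStable_iff_tendsto_pow_mulVec :
    SchurStable M ↔ ∀ v, Tendsto (fun t : ℕ => (M ^ t) *ᵥ v) atTop (𝓝 0) := by
  rw [← Matrix.tendsto_nhds_zero_iff_forall_tendsto_mulVec]
  exact ⟨SchurStable.tendsto_pow, SchurStable.of_tendsto_pow⟩

end SchurStable

section Observer

variable {n m p r : ℕ}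
  {A : Matrix (Fin n) (Fin n) ℝ} {B : Matrix (Fin n) (Fin m) ℝ}
  {Cm : Matrix (Fin p) (Fin n) ℝ} {Dm : Matrix (Fin p) (Fin m) ℝ}
  {E : Matrix (Fin n) (Fin r) ℝ} {F : Matrix (Fin p) (Fin r) ℝ}
  {Auio : Matrix (Fin n) (Fin n) ℝ} {Bu : Matrix (Fin n) (Fin m) ℝ}
  {By : Matrix (Fin n) (Fin p) ℝ} {Du : Matrix (Fin n) (Fin m) ℝ}
  {Dy : Matrix (Fin n) (Fin p) ℝ}
  {x xh z : ℕ → Fin n → ℝ} {u : ℕ → Fin m → ℝ} {y : ℕ → Fin p → ℝ} {d : ℕ → Fin r → ℝ}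

def AcceptorEquations (A : Matrix (Fin n) (Fin n) ℝ) (B : Matrix (Fin n) (Fin m) ℝ)
    (Cm : Matrix (Fin p) (Fin n) ℝ) (Dm : Matrix (Fin p) (Fin m) ℝ)
    (E : Matrix (Fin n) (Fin r) ℝ) (F : Matrix (Fin p) (Fin r) ℝ)
    (Auio : Matrix (Fin n) (Fin n) ℝ) (Bu : Matrix (Fin n) (Fin m) ℝ)
    (By : Matrix (Fin n) (Fin p) ℝ) (Du : Matrix (Fin n) (Fin m) ℝ)
    (Dy : Matrix (Fin n) (Fin p) ℝ) : Prop :=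
  (1 - Dy * Cm) * E + (Auio * Dy - By) * F = 0 ∧
  Dy * F = 0 ∧
  Auio = (1 - Dy * Cm) * A + (Auio * Dy - By) * Cm ∧
  Bu = (1 - Dy * Cm) * B - By * Dm ∧
  Du = -(Dy * Dm)

def trackingState (Du : Matrix (Fin n) (Fin m) ℝ) (Dy : Matrix (Fin n) (Fin p) ℝ)
    (x : ℕ → Fin n → ℝ) (u : ℕ → Fin m → ℝ) (y : ℕ → Fin p → ℝ) (t : ℕ) : Fin n → ℝ :=
  x t - Du *ᵥ u t - Dy *ᵥ y t

def trackingDefect (Auio : Matrix (Fin n) (Fin n) ℝ) (Bu : Matrix (Fin n) (Fin m) ℝ)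
    (By : Matrix (Fin n) (Fin p) ℝ) (Du : Matrix (Fin n) (Fin m) ℝ)
    (Dy : Matrix (Fin n) (Fin p) ℝ) (x : ℕ → Fin n → ℝ) (u : ℕ → Fin m → ℝ)
    (y : ℕ → Fin p → ℝ) (t : ℕ) : Fin n → ℝ :=
  trackingState Du Dy x u y (t + 1) -
    (Auio *ᵥ trackingState Du Dy x u y t + Bu *ᵥ u t + By *ᵥ y t)

theorem exists_sigmaSol (A : Matrix (Fin n) (Fin n) ℝ) (B : Matrix (Fin n) (Fin m) ℝ)
    (Cm : Matrix (Fin p) (Fin n) ℝ) (Dm : Matrix (Fin p) (Fin m) ℝ)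
    (E : Matrix (Fin n) (Fin r) ℝ) (F : Matrix (Fin p) (Fin r) ℝ) (x₀ : Fin n → ℝ)
    (u : ℕ → Fin m → ℝ) (d : ℕ → Fin r → ℝ) :
    ∃ x y, SigmaSol A B Cm Dm E F x u y d ∧ x 0 = x₀ :=
  let x : ℕ → Fin n → ℝ := fun t => Nat.rec x₀ (fun k xk => A *ᵥ xk + B *ᵥ u k + E *ᵥ d k) t
  ⟨x, fun t => Cm *ᵥ x t + Dm *ᵥ u t + F *ᵥ d t, fun _ => ⟨rfl, rfl⟩, rfl⟩

theorem SigmaSol.trackingDefect_eq (h : SigmaSol A B Cm Dm E F x u y d) (t : ℕ) :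
    trackingDefect Auio Bu By Du Dy x u y t =
      ((1 - Dy * Cm) * A + (Auio * Dy - By) * Cm - Auio) *ᵥ x t +
      ((1 - Dy * Cm) * B - By * Dm - Bu + Auio * (Du + Dy * Dm)) *ᵥ u t +
      ((1 - Dy * Cm) * E + (Auio * Dy - By) * F) *ᵥ d t -
      (Du + Dy * Dm) *ᵥ u (t + 1) - (Dy * F) *ᵥ d (t + 1) := by
  obtain ⟨hx, hy⟩ := h t
  rw [trackingDefect, trackingState, trackingState, (h (t + 1)).2, hx, hy]
  simp only [Matrix.sub_mul, Matrix.mul_add, add_mulVec, sub_mulVec, one_mulVec,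
    mulVec_add, mulVec_sub, ← mulVec_mulVec]
  abel

theorem AcceptorEquations.trackingDefect_eq_zero
    (h : AcceptorEquations A B Cm Dm E F Auio Bu By Du Dy)
    (hsol : SigmaSol A B Cm Dm E F x u y d) (t : ℕ) :
    trackingDefect Auio Bu By Du Dy x u y t = 0 := by
  obtain ⟨hE, hF, hA, hB, hD⟩ := h
  rw [hsol.trackingDefect_eq, hE, hF, ← hA, ← hB, hD]
  simp

theorem AcceptorEquations.of_forall_trackingDefect_eq_zero
    (h : ∀ x u y d, SigmaSol A B Cm Dm E F x u y d →
      ∀ t, trackingDefect Auio Bu By Du Dy x u y t = 0) :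
    AcceptorEquations A B Cm Dm E F Auio Bu By Du Dy := by
  have key : ∀ x₀ u₀ u₁ d₀ d₁,
      ((1 - Dy * Cm) * A + (Auio * Dy - By) * Cm - Auio) *ᵥ x₀ +
      ((1 - Dy * Cm) * B - By * Dm - Bu + Auio * (Du + Dy * Dm)) *ᵥ u₀ +
      ((1 - Dy * Cm) * E + (Auio * Dy - By) * F) *ᵥ d₀ -
      (Du + Dy * Dm) *ᵥ u₁ - (Dy * F) *ᵥ d₁ = 0 := by
    intro x₀ u₀ u₁ d₀ d₁
    let u : ℕ → Fin m → ℝ := fun t => if t = 0 then u₀ else u₁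
    let d : ℕ → Fin r → ℝ := fun t => if t = 0 then d₀ else d₁
    obtain ⟨x, y, hsol, hx₀⟩ := exists_sigmaSol A B Cm Dm E F x₀ u d
    simpa [u, d, hx₀, hsol.trackingDefect_eq] using h x u y d hsol 0
  have hE : (1 - Dy * Cm) * E + (Auio * Dy - By) * F = 0 :=
    ext_iff_mulVec.2 fun v => by simpa using key 0 0 0 v 0
  have hF : Dy * F = 0 := ext_iff_mulVec.2 fun v => by simpa using key 0 0 0 0 v
  have hA : (1 - Dy * Cm) * A + (Auio * Dy - By) * Cm - Auio = 0 :=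
    ext_iff_mulVec.2 fun v => by simpa using key v 0 0 0 0
  have hD : Du + Dy * Dm = 0 := ext_iff_mulVec.2 fun v => by simpa using key 0 0 v 0 0
  have hB : (1 - Dy * Cm) * B - By * Dm - Bu + Auio * (Du + Dy * Dm) = 0 :=
    ext_iff_mulVec.2 fun v => by simpa using key 0 v 0 0 0
  rw [hD, Matrix.mul_zero, add_zero, sub_eq_zero] at hB
  exact ⟨hE, hF, (sub_eq_zero.1 hA).symm, hB.symm, eq_neg_of_add_eq_zero_left hD⟩

theorem ObsSol.sub_succ (h : ObsSol Auio Bu By Du Dy xh u y z) (t : ℕ) :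
    x (t + 1) - xh (t + 1) =
      Auio *ᵥ (x t - xh t) + trackingDefect Auio Bu By Du Dy x u y t := by
  rw [trackingDefect, trackingState, trackingState, (h (t + 1)).2, (h t).2, (h t).1]
  simp only [mulVec_add, mulVec_sub]
  abel

theorem ObsSol.sub_eq_pow_mulVec (h : ObsSol Auio Bu By Du Dy xh u y z)
    (hdef : ∀ t, trackingDefect Auio Bu By Du Dy x u y t = 0) (t : ℕ) :
    x t - xh t = (Auio ^ t) *ᵥ (x 0 - xh 0) := by
  induction t with
  | zero => simp
  | succ t ih => rw [h.sub_succ, hdef, add_zero, ih, mulVec_mulVec, ← pow_succ']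

theorem isAcceptor_iff_forall_trackingDefect_eq_zero :
    IsAcceptor A B Cm Dm E F Auio Bu By Du Dy ↔
      ∀ x u y d, SigmaSol A B Cm Dm E F x u y d →
        ∀ t, trackingDefect Auio Bu By Du Dy x u y t = 0 := by
  refine ⟨fun h x u y d hsol t => ?_, fun h x u y d hsol => ?_⟩
  · obtain ⟨z, hz⟩ := h x u y d hsol
    simpa using (hz.sub_succ (x := x) t).symm
  · refine ⟨trackingState Du Dy x u y, fun t => ⟨?_, ?_⟩⟩
    · exact sub_eq_zero.1 (h x u y d hsol t)
    · rw [trackingState]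
      abel

theorem isAcceptor_iff_acceptorEquations :
    IsAcceptor A B Cm Dm E F Auio Bu By Du Dy ↔
      AcceptorEquations A B Cm Dm E F Auio Bu By Du Dy := by
  rw [isAcceptor_iff_forall_trackingDefect_eq_zero]
  exact ⟨AcceptorEquations.of_forall_trackingDefect_eq_zero,
    fun h _ _ _ _ hsol => h.trackingDefect_eq_zero hsol⟩

theorem isUIO_iff :
    IsUIO A B Cm Dm E F Auio Bu By Du Dy ↔
      SchurStable Auio ∧ AcceptorEquations A B Cm Dm E F Auio Bu By Du Dy := by
  rw [IsUIO, isAcceptor_iff_acceptorEquations, and_comm]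
  refine and_congr_left fun heqs => ⟨fun herr => ?_, fun hstable => ?_⟩
  · refine schurStable_iff_tendsto_pow_mulVec.2 fun v => ?_
    have hsol : SigmaSol A B Cm Dm E F 0 0 0 0 := fun t => by simp
    have hobs : ObsSol Auio Bu By Du Dy (fun t => Auio ^ t *ᵥ v) 0 0
        (fun t => Auio ^ t *ᵥ v) := fun t => by simp [pow_succ', ← mulVec_mulVec]
    simpa using (herr _ _ _ _ _ _ hsol hobs).neg
  · intro x u y d xh z hsol hobs
    rw [tendsto_congr (hobs.sub_eq_pow_mulVec (heqs.trackingDefect_eq_zero hsol))]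
    exact schurStable_iff_tendsto_pow_mulVec.1 hstable _

end Observer

theorem theorem2_i_iff_v_general {n m p r : ℕ}
    (A : Matrix (Fin n) (Fin n) ℝ) (B : Matrix (Fin n) (Fin m) ℝ)
    (Cm : Matrix (Fin p) (Fin n) ℝ) (Dm : Matrix (Fin p) (Fin m) ℝ)
    (E : Matrix (Fin n) (Fin r) ℝ) (F : Matrix (Fin p) (Fin r) ℝ) :
    (∃ (Auio : Matrix (Fin n) (Fin n) ℝ) (Bu : Matrix (Fin n) (Fin m) ℝ)
      (By : Matrix (Fin n) (Fin p) ℝ) (Du : Matrix (Fin n) (Fin m) ℝ)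
      (Dy : Matrix (Fin n) (Fin p) ℝ), IsUIO A B Cm Dm E F Auio Bu By Du Dy) ↔
      ∃ (Auio : Matrix (Fin n) (Fin n) ℝ) (Bu : Matrix (Fin n) (Fin m) ℝ)
        (By : Matrix (Fin n) (Fin p) ℝ) (Du : Matrix (Fin n) (Fin m) ℝ)
        (Dy : Matrix (Fin n) (Fin p) ℝ),
        SchurStable Auio ∧ ((1 - Dy * Cm) * E + (Auio * Dy - By) * F = 0 ∧
      Dy * F = 0 ∧
      Auio = (1 - Dy * Cm) * A + (Auio * Dy - By) * Cm ∧
      Bu = (1 - Dy * Cm) * B - By * Dm ∧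
      Du = -(Dy * Dm)) := by
  simp only [isUIO_iff, AcceptorEquations]

theorem theorem2_i_iff_v {n m p r : ℕ} (hn : 0 < n) (hm : 0 < m) (hp : 0 < p) (hr : 0 < r)
    (A : Matrix (Fin n) (Fin n) ℝ) (B : Matrix (Fin n) (Fin m) ℝ)
    (Cm : Matrix (Fin p) (Fin n) ℝ) (Dm : Matrix (Fin p) (Fin m) ℝ)
    (E : Matrix (Fin n) (Fin r) ℝ) (F : Matrix (Fin p) (Fin r) ℝ)
    (hEF : (Matrix.fromRows E F).rank = r) :
    (∃ (Auio : Matrix (Fin n) (Fin n) ℝ) (Bu : Matrix (Fin n) (Fin m) ℝ)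
      (By : Matrix (Fin n) (Fin p) ℝ) (Du : Matrix (Fin n) (Fin m) ℝ)
      (Dy : Matrix (Fin n) (Fin p) ℝ), IsUIO A B Cm Dm E F Auio Bu By Du Dy) ↔
      ∃ (Auio : Matrix (Fin n) (Fin n) ℝ) (Bu : Matrix (Fin n) (Fin m) ℝ)
        (By : Matrix (Fin n) (Fin p) ℝ) (Du : Matrix (Fin n) (Fin m) ℝ)
        (Dy : Matrix (Fin n) (Fin p) ℝ),
        SchurStable Auio ∧ ((1 - Dy * Cm) * E + (Auio * Dy - By) * F = 0 ∧
      Dy * F = 0 ∧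
      Auio = (1 - Dy * Cm) * A + (Auio * Dy - By) * Cm ∧
      Bu = (1 - Dy * Cm) * B - By * Dm ∧
      Du = -(Dy * Dm)) :=
  theorem2_i_iff_v_general A B Cm Dm E F
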